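/- arXiv:2007.13949 — 4 statements merged into one kernel-verified Lean document; each statement's English description precedes it below -/
import Mathlib

section
/- For every positive integer r there exist positive real constants c₁ and c₂, depending only on r, such that for every finite field F of cardinality q one has c₁·q^(r²−1) ≤ #S(r,F) ≤ c₂·q^(r²−1). -/
/-!
A matrix `M` fixes a nonzero vector iff `M - 1` is singular, so `#S(r, F)` is the number of
singular matrices `N = M - 1` minus the number of `M` for which both `M` and `M - 1` are singular.
The formula for `#GL(r, F)` shows that at least `q ^ (r² - 1)` matrices are singular, and double
counting pairs `(M, v)` with `v ≠ 0`, `M v = 0` shows that at most `q ^ r² / (q - 1)` are, which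
gives the upper bound. For linearly independent `v, w`, the conditions `M v = 0`, `M w = w` cut
out an affine space of dimension `r (r - 2)`; double counting triples `(M, v, w)` then bounds the
matrices with `M` and `M - 1` both singular by `q ^ r² / (q - 1)²`, which is at most
`q ^ (r² - 1) / 2` once `q ≥ 4`. For `q < 4`, the identity matrix alone gives
`#S(r, F) ≥ 1 ≥ (q / 4) ^ (r² - 1)`.
-/

open Matrix Finset

theorem finrank_ker_mulVecLin_of_linearIndependent {F k n : Type*} [Field F] [Fintype k]
    [Fintype n] {b : k → n → F} (hb : LinearIndependent F b) :
    Module.finrank F (LinearMap.ker (Matrix.of b).mulVecLin) =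
      Fintype.card n - Fintype.card k := by
  have hrank : (Matrix.of b).rank = Fintype.card k := by
    rw [rank_eq_finrank_span_row]
    exact finrank_span_eq_card hb
  have := LinearMap.finrank_range_add_finrank_ker (Matrix.of b).mulVecLin
  rw [Module.finrank_fintype_fun_eq_card] at this
  rw [Matrix.rank] at hrank
  omega

theorem sub_one_mulVec_eq_zero_iff {R n : Type*} [Ring R] [Fintype n] [DecidableEq n]
    {M : Matrix n n R} {w : n → R} : (M - 1) *ᵥ w = 0 ↔ M *ᵥ w = w := by
  rw [sub_mulVec, one_mulVec, sub_eq_zero]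

theorem exists_mulVec_eq_self_iff {F n : Type*} [Field F] [Fintype n] [DecidableEq n]
    {M : Matrix n n F} : (∃ v, v ≠ 0 ∧ M *ᵥ v = v) ↔ (M - 1).det = 0 := by
  simp only [← exists_mulVec_eq_zero_iff, sub_one_mulVec_eq_zero_iff]

theorem linearIndependent_pair_of_mulVec_eq_zero_of_mulVec_eq_self {F n : Type*} [Field F]
    [Fintype n] {M : Matrix n n F} {v w : n → F} (hv : v ≠ 0) (hw : w ≠ 0) (hMv : M *ᵥ v = 0)
    (hMw : M *ᵥ w = w) : LinearIndependent F ![v, w] := by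
  refine LinearIndependent.pair_iff.mpr fun s t hst => ?_
  have ht : t = 0 := by
    have := congrArg (M *ᵥ ·) hst
    simp only [mulVec_add, mulVec_smul, hMv, hMw, smul_zero, zero_add, mulVec_zero] at this
    exact (smul_eq_zero.mp this).resolve_right hw
  subst ht
  rw [zero_smul, add_zero] at hst
  exact ⟨(smul_eq_zero.mp hst).resolve_right hv, rfl⟩

theorem card_GL_le {F : Type*} [Field F] [Fintype F] {r : ℕ} (hr : 0 < r) :
    Nat.card (GL (Fin r) F) ≤ (Fintype.card F - 1) * Fintype.card F ^ (r * r - 1) := by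
  obtain ⟨s, rfl⟩ : ∃ s, r = s + 1 := ⟨r - 1, by omega⟩
  set q := Fintype.card F
  have hlast : q ^ (s + 1) - q ^ s = q ^ s * (q - 1) := by rw [pow_succ, Nat.mul_sub_one]
  have hexp : (s + 1) * (s + 1) - 1 = (s + 1) * s + s := by ring_nf; omega
  rw [card_GL_field, Fin.prod_univ_castSucc]
  calc _ ≤ (∏ _i : Fin s, q ^ (s + 1)) * (q ^ (s + 1) - q ^ s) :=
        Nat.mul_le_mul_right _ (prod_le_prod' fun _ _ => Nat.sub_le _ _)
    _ = _ := by
        rw [prod_const, card_univ, Fintype.card_fin, hlast, hexp]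
        ring

section Counting

variable {F : Type*} [Field F] [Fintype F] [DecidableEq F]
  {m n k : Type*} [Fintype m] [Fintype n] [Fintype k] [DecidableEq n]

theorem card_sub_one_le_card_ker_ne_zero {A : Matrix m n F} {v : n → F} (hv : v ≠ 0)
    (hAv : A *ᵥ v = 0) : Fintype.card F - 1 ≤ #{w : n → F | w ≠ 0 ∧ A *ᵥ w = 0} := by
  rw [← card_univ, ← card_erase_of_mem (mem_univ 0), ← filter_ne']
  refine card_le_card_of_injOn (· • v) (fun a ha => ?_)
    (fun a _ b _ h => smul_left_injective F hv h)
  simp only [coe_filter, mem_univ, true_and, Set.mem_ofPred_eq] at ha ⊢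
  exact ⟨smul_ne_zero ha hv, by rw [mulVec_smul, hAv, smul_zero]⟩

variable [DecidableEq m]

theorem card_mulVec_eq_zero_of_linearIndependent {b : k → n → F} (hb : LinearIndependent F b) :
    #{M : Matrix m n F | ∀ j, M *ᵥ b j = 0} =
      Fintype.card F ^ (Fintype.card m * (Fintype.card n - Fintype.card k)) := by
  set K := LinearMap.ker (Matrix.of b).mulVecLin
  have hmem : ∀ M : Matrix m n F, (∀ j, M *ᵥ b j = 0) ↔ ∀ i, M i ∈ K := by
    intro M
    simp only [K, LinearMap.mem_ker, mulVecLin_apply, funext_iff, mulVec, of_apply,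
      Pi.zero_apply]
    simp_rw [dotProduct_comm (b _)]
    exact forall_comm
  classical
  rw [← Fintype.card_subtype, Fintype.card_congr ((Equiv.subtypeEquivRight hmem).trans
      (Equiv.subtypePiEquivPi (β := fun _ => n → F))), Fintype.card_pi, prod_const, card_univ,
    Module.card_eq_pow_finrank (K := F) (V := K), finrank_ker_mulVecLin_of_linearIndependent hb,
    ← pow_mul, mul_comm]

theorem card_mulVec_eq_le_of_linearIndependent {b : k → n → F} (hb : LinearIndependent F b)
    (y : k → m → F) :
    #{M : Matrix m n F | ∀ j, M *ᵥ b j = y j} ≤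
      Fintype.card F ^ (Fintype.card m * (Fintype.card n - Fintype.card k)) := by
  rcases eq_empty_or_nonempty {M : Matrix m n F | ∀ j, M *ᵥ b j = y j} with h | ⟨M₀, hM₀⟩
  · simp [h]
  rw [← card_mulVec_eq_zero_of_linearIndependent hb]
  refine card_le_card_of_injOn (· - M₀) (fun M hM => ?_)
    (fun _ _ _ _ h => sub_left_injective h)
  simp only [coe_filter, mem_filter, mem_univ, true_and, Set.mem_ofPred_eq] at hM hM₀ ⊢
  intro j
  rw [sub_mulVec, hM, hM₀, sub_self]

theorem card_det_eq_zero_mul_le :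
    #{M : Matrix n n F | M.det = 0} * (Fintype.card F - 1) ≤
      Fintype.card F ^ (Fintype.card n * Fintype.card n) := by
  have key := card_mul_le_card_mul (fun (M : Matrix n n F) v => v ≠ 0 ∧ M *ᵥ v = 0)
    (s := {M | M.det = 0}) (t := univ) (m := Fintype.card F - 1)
    (n := Fintype.card F ^ (Fintype.card n * (Fintype.card n - 1)))
    (fun M hM => by
      obtain ⟨v, hv, hMv⟩ := exists_mulVec_eq_zero_iff.mpr (mem_filter.mp hM).2
      exact card_sub_one_le_card_ker_ne_zero hv hMv)
    (fun v _ => by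
      by_cases hv : v = 0
      · simp [bipartiteBelow, hv]
      have hcard := card_mulVec_eq_zero_of_linearIndependent (m := n)
        (linearIndependent_unique_iff.mpr hv : LinearIndependent F ![v])
      rw [Fintype.card_fin] at hcard
      refine hcard ▸ card_le_card fun M hM => ?_
      simp only [bipartiteBelow, mem_filter, mem_univ, true_and] at hM ⊢
      simpa using hM.2.2)
  calc _ ≤ _ := key
    _ = _ := by
      rw [card_univ, Fintype.card_fun, ← pow_add]
      congr 1
      cases Fintype.card n <;> simp [Nat.mul_succ]; ring

theorem card_det_eq_zero_and_det_sub_one_eq_zero_mul_le (hn : 2 ≤ Fintype.card n) :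
    #{M : Matrix n n F | M.det = 0 ∧ (M - 1).det = 0} *
        ((Fintype.card F - 1) * (Fintype.card F - 1)) ≤
      Fintype.card F ^ (Fintype.card n * Fintype.card n) := by
  let IsWitness (M : Matrix n n F) (p : (n → F) × (n → F)) : Prop :=
    (p.1 ≠ 0 ∧ M *ᵥ p.1 = 0) ∧ (p.2 ≠ 0 ∧ (M - 1) *ᵥ p.2 = 0)
  have key := card_mul_le_card_mul IsWitness (s := {M | M.det = 0 ∧ (M - 1).det = 0})
    (t := univ) (m := (Fintype.card F - 1) * (Fintype.card F - 1))
    (n := Fintype.card F ^ (Fintype.card n * (Fintype.card n - 2)))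
    (fun M hM => by
      obtain ⟨hM₀, hM₁⟩ := (mem_filter.mp hM).2
      obtain ⟨v, hv, hMv⟩ := exists_mulVec_eq_zero_iff.mpr hM₀
      obtain ⟨w, hw, hMw⟩ := exists_mulVec_eq_zero_iff.mpr hM₁
      calc _ ≤ #(({v | v ≠ 0 ∧ M *ᵥ v = 0} : Finset _) ×ˢ
            ({w | w ≠ 0 ∧ (M - 1) *ᵥ w = 0} : Finset _)) := by
            rw [card_product]
            exact Nat.mul_le_mul (card_sub_one_le_card_ker_ne_zero hv hMv)
              (card_sub_one_le_card_ker_ne_zero hw hMw)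
        _ ≤ _ := card_le_card fun p hp => by simpa [bipartiteAbove, IsWitness] using hp)
    (fun ⟨v, w⟩ _ => by
      by_cases h : ∃ M, IsWitness M (v, w)
      swap
      · push Not at h
        simp [bipartiteBelow, h]
      obtain ⟨M₀, ⟨hv, hM₀v⟩, ⟨hw, hM₀w⟩⟩ := h
      have hind := linearIndependent_pair_of_mulVec_eq_zero_of_mulVec_eq_self hv hw hM₀v
        (sub_one_mulVec_eq_zero_iff.mp hM₀w)
      have hcard := card_mulVec_eq_le_of_linearIndependent (m := n) hind ![0, w]
      rw [Fintype.card_fin] at hcard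
      refine le_trans (card_le_card fun M hM => ?_) hcard
      simp only [bipartiteBelow, IsWitness, mem_filter, mem_univ, true_and] at hM ⊢
      intro j
      fin_cases j
      · exact hM.2.1.2
      · exact sub_one_mulVec_eq_zero_iff.mp hM.2.2.2)
  calc _ ≤ _ := key
    _ = _ := by
      rw [card_univ, Fintype.card_prod, Fintype.card_fun, ← pow_add, ← pow_add]
      congr 1
      obtain ⟨c, hc⟩ := Nat.exists_eq_add_of_le hn
      rw [hc, Nat.add_sub_cancel_left]
      ring

theorem card_det_sub_one_eq_zero :
    #{M : Matrix n n F | (M - 1).det = 0} = #{M : Matrix n n F | M.det = 0} :=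
  card_nbij' (· - 1) (· + 1) (fun M hM => by simpa using hM) (fun M hM => by simpa using hM)
    (fun M _ => sub_add_cancel M 1) (fun M _ => add_sub_cancel_right M 1)

theorem card_fixing_add_card_det_eq_zero_and_det_sub_one_eq_zero :
    #{M : Matrix n n F | M.det ≠ 0 ∧ (M - 1).det = 0} +
        #{M : Matrix n n F | M.det = 0 ∧ (M - 1).det = 0} =
      #{M : Matrix n n F | M.det = 0} := by
  rw [← card_det_sub_one_eq_zero, ← card_filter_add_card_filter_not
    (s := {M : Matrix n n F | (M - 1).det = 0}) (fun M => M.det ≠ 0), filter_filter,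
    filter_filter]
  simp only [not_not, and_comm]

theorem card_det_ne_zero_eq_natCard_GL :
    #{M : Matrix n n F | M.det ≠ 0} = Nat.card (GL n F) := by
  rw [← Fintype.card_subtype, ← Nat.card_eq_fintype_card]
  exact Nat.card_congr ⟨fun M => GeneralLinearGroup.mkOfDetNeZero M.1 M.2,
    fun g => ⟨g, ((isUnit_iff_isUnit_det _).mp g.isUnit).ne_zero⟩, fun _ => rfl,
    fun _ => Units.ext rfl⟩

theorem natCard_GL_fixing_eq_card :
    Nat.card {g : GL n F | ∃ v : n → F, v ≠ 0 ∧ (g : Matrix n n F) *ᵥ v = v} =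
      #{M : Matrix n n F | M.det ≠ 0 ∧ (M - 1).det = 0} := by
  rw [← Fintype.card_subtype, ← Nat.card_eq_fintype_card]
  exact Nat.card_congr ⟨fun g => ⟨g.1, ((isUnit_iff_isUnit_det _).mp g.1.isUnit).ne_zero,
      exists_mulVec_eq_self_iff.mp g.2⟩,
    fun M => ⟨GeneralLinearGroup.mkOfDetNeZero M.1 M.2.1, exists_mulVec_eq_self_iff.mpr M.2.2⟩,
    fun _ => Subtype.ext (Units.ext rfl), fun _ => rfl⟩

theorem card_det_eq_zero_add_card_det_ne_zero :
    #{M : Matrix n n F | M.det = 0} + #{M : Matrix n n F | M.det ≠ 0} =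
      Fintype.card F ^ (Fintype.card n * Fintype.card n) := by
  rw [card_filter_add_card_filter_not, card_univ]
  change Fintype.card (n → n → F) = _
  rw [Fintype.card_fun, Fintype.card_fun, ← pow_mul, mul_comm]

theorem pow_le_card_det_eq_zero {r : ℕ} (hr : 0 < r) :
    Fintype.card F ^ (r * r - 1) ≤ #{M : Matrix (Fin r) (Fin r) F | M.det = 0} := by
  have htotal := card_det_eq_zero_add_card_det_ne_zero (F := F) (n := Fin r)
  rw [card_det_ne_zero_eq_natCard_GL, Fintype.card_fin,
    ← mul_pow_sub_one (Nat.mul_pos hr hr).ne'] at htotal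
  have hGL := card_GL_le (F := F) hr
  obtain ⟨p, hp⟩ : ∃ p, Fintype.card F = p + 1 :=
    ⟨_, (Nat.succ_pred_eq_of_pos Fintype.card_pos).symm⟩
  rw [hp, Nat.add_sub_cancel] at hGL
  rw [hp] at htotal ⊢
  linarith

theorem card_fixing_le (hn : 0 < Fintype.card n) :
    #{M : Matrix n n F | M.det ≠ 0 ∧ (M - 1).det = 0} ≤
      2 * Fintype.card F ^ (Fintype.card n * Fintype.card n - 1) := by
  have hq : 2 ≤ Fintype.card F := Fintype.one_lt_card
  have hsplit := card_fixing_add_card_det_eq_zero_and_det_sub_one_eq_zero (F := F) (n := n)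
  have hsing := card_det_eq_zero_mul_le (F := F) (n := n)
  rw [← mul_pow_sub_one (Nat.mul_pos hn hn).ne'] at hsing
  have hsing' : #{M : Matrix n n F | M.det = 0} ≤
      2 * Fintype.card F ^ (Fintype.card n * Fintype.card n - 1) := by
    refine Nat.le_of_mul_le_mul_right (hsing.trans ?_) (by omega : 0 < Fintype.card F - 1)
    rw [mul_right_comm]
    exact Nat.mul_le_mul_right _ (by omega)
  omega

theorem two_mul_card_det_eq_zero_and_det_sub_one_eq_zero_le (hn : 2 ≤ Fintype.card n)
    (hq : 4 ≤ Fintype.card F) :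
    2 * #{M : Matrix n n F | M.det = 0 ∧ (M - 1).det = 0} ≤
      Fintype.card F ^ (Fintype.card n * Fintype.card n - 1) := by
  have hd := card_det_eq_zero_and_det_sub_one_eq_zero_mul_le (F := F) hn
  rw [← mul_pow_sub_one (Nat.mul_pos (by omega) (by omega)).ne'] at hd
  obtain ⟨p, hp⟩ : ∃ p, Fintype.card F = p + 1 :=
    ⟨_, (Nat.succ_pred_eq_of_pos Fintype.card_pos).symm⟩
  rw [hp, Nat.add_sub_cancel] at hd
  rw [hp] at hq ⊢
  have hp2 : 2 * (p + 1) ≤ p * p := by nlinarith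
  refine Nat.le_of_mul_le_mul_right (c := p * p) ?_ (Nat.mul_pos (by omega) (by omega))
  calc _ = 2 * (#{M : Matrix n n F | M.det = 0 ∧ (M - 1).det = 0} * (p * p)) := by ring
    _ ≤ 2 * ((p + 1) * (p + 1) ^ (Fintype.card n * Fintype.card n - 1)) := by gcongr
    _ ≤ _ := by rw [← mul_assoc, mul_comm _ (p * p)]; gcongr

theorem pow_le_four_pow_mul_card_fixing {r : ℕ} (hr : 0 < r) :
    Fintype.card F ^ (r * r - 1) ≤
      4 ^ (r * r - 1) * #{M : Matrix (Fin r) (Fin r) F | M.det ≠ 0 ∧ (M - 1).det = 0} := by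
  have hone : 1 ≤ #{M : Matrix (Fin r) (Fin r) F | M.det ≠ 0 ∧ (M - 1).det = 0} :=
    have : Nonempty (Fin r) := ⟨⟨0, hr⟩⟩
    card_pos.mpr ⟨1, by simp [det_zero]⟩
  by_cases h : 2 ≤ r ∧ 4 ≤ Fintype.card F
  · have hsing := pow_le_card_det_eq_zero (F := F) hr
    have hsplit := card_fixing_add_card_det_eq_zero_and_det_sub_one_eq_zero (F := F) (n := Fin r)
    have hboth := two_mul_card_det_eq_zero_and_det_sub_one_eq_zero_le (n := Fin r)
      (by simpa using h.1) h.2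
    rw [Fintype.card_fin] at hboth
    have hfour : 2 ≤ 4 ^ (r * r - 1) :=
      le_trans (by norm_num) (Nat.le_self_pow (by have := Nat.mul_le_mul h.1 h.1; omega) 4)
    have htwo : Fintype.card F ^ (r * r - 1) ≤
        2 * #{M : Matrix (Fin r) (Fin r) F | M.det ≠ 0 ∧ (M - 1).det = 0} := by
      omega
    exact htwo.trans (Nat.mul_le_mul_right _ hfour)
  · calc _ ≤ 4 ^ (r * r - 1) := by
          rcases not_and_or.mp h with hr1 | hq
          · obtain rfl : r = 1 := by omega
            simp
          · exact Nat.pow_le_pow_left (by omega) _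
      _ ≤ _ := Nat.le_mul_of_pos_right _ hone

end Counting

/-- For every positive integer `r` there exist positive real constants `c₁`, `c₂`,
depending only on `r`, such that for every finite field `F` of cardinality `q`,
`c₁ * q ^ (r² - 1) ≤ #S(r, F) ≤ c₂ * q ^ (r² - 1)`, where `S(r, F)` is the set of
invertible matrices fixing some nonzero vector. -/
theorem card_fixing_matrices_bounds (r : ℕ) (hr : 0 < r) :
    ∃ c₁ c₂ : ℝ, 0 < c₁ ∧ 0 < c₂ ∧
      ∀ (F : Type) [Field F] [Fintype F],
        c₁ * (Fintype.card F : ℝ) ^ (r ^ 2 - 1) ≤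
            (Nat.card {g : GL (Fin r) F |
              ∃ v : Fin r → F, v ≠ 0 ∧ Matrix.mulVec (↑g) v = v} : ℝ) ∧
          (Nat.card {g : GL (Fin r) F |
              ∃ v : Fin r → F, v ≠ 0 ∧ Matrix.mulVec (↑g) v = v} : ℝ) ≤
            c₂ * (Fintype.card F : ℝ) ^ (r ^ 2 - 1) := by
  refine ⟨1 / 4 ^ (r ^ 2 - 1), 2, by positivity, two_pos, fun F _ _ => ?_⟩
  classical
  have hlower := pow_le_four_pow_mul_card_fixing (F := F) hr
  have hupper := card_fixing_le (F := F) (n := Fin r) (by simpa using hr)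
  rw [Fintype.card_fin] at hupper
  rw [natCard_GL_fixing_eq_card, sq]
  constructor
  · rw [one_div_mul_eq_div, div_le_iff₀ (by positivity)]
    exact_mod_cast hlower.trans_eq (mul_comm _ _)
  · exact_mod_cast hupper
end

section
/- For every positive integer r there exist positive real constants c₁' and c₂', depending only on r, such that for every finite field F of cardinality q one has c₁'/q ≤ #S(r,F) / #GL(r,F) ≤ c₂'/q. -/
/-!
Let `f g` be the number of nonzero vectors fixed by `g ∈ G = GL(V)`, `q = #F`. By Burnside's
lemma `∑ f = #G`, since `G` is transitive on nonzero vectors, and `∑ f² = #G · (#orbits on pairs)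
≤ q · #G`, since a pair of nonzero vectors is determined up to `G` by the scalar relating them or
by being linearly independent. Cauchy–Schwarz over the set `S` of `g` with `f g > 0` gives
`#G² ≤ #S · q · #G`, and a fixed vector brings its `q - 1` nonzero multiples along, so
`(q - 1) · #S ≤ #G`. Hence `1/q ≤ #S/#G ≤ 1/(q - 1) ≤ 2/q`.
-/

open Matrix MulAction Finset

namespace MulAction

variable {G X : Type*} [Group G] [MulAction G X]

theorem fixedBy_prod (g : G) : fixedBy (X × X) g = fixedBy X g ×ˢ fixedBy X g := by
  ext; simp [Prod.ext_iff]

theorem natCard_setOf_fixedBy_nonempty [Fintype G]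
    [DecidablePred fun g : G => (fixedBy X g).Nonempty] :
    Nat.card {g : G | (fixedBy X g).Nonempty} = #{g : G | (fixedBy X g).Nonempty} := by
  rw [Nat.card_coe_set_eq, Set.ncard_eq_toFinset_card', Set.toFinset_ofPred]

variable [Fintype G] [Finite X]

variable (G X) in
theorem sum_natCard_fixedBy :
    ∑ g : G, Nat.card (fixedBy X g) = Nat.card (orbitRel.Quotient G X) * Nat.card G := by
  classical
  have := Fintype.ofFinite X
  have := Fintype.ofFinite (orbitRel.Quotient G X)
  simpa only [Nat.card_eq_fintype_card] using sum_card_fixedBy_eq_card_orbits_mul_card_group G X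

variable (G X) in
theorem sum_natCard_fixedBy_sq :
    ∑ g : G, Nat.card (fixedBy X g) ^ 2 =
      Nat.card (orbitRel.Quotient G (X × X)) * Nat.card G := by
  rw [← sum_natCard_fixedBy]
  refine Finset.sum_congr rfl fun g _ => ?_
  rw [fixedBy_prod, Nat.card_congr (Equiv.Set.prod _ _), Nat.card_prod, sq]

variable (G X) in
theorem natCard_mul_sq_natCard_orbits_le :
    Nat.card G * Nat.card (orbitRel.Quotient G X) ^ 2 ≤
      Nat.card {g : G | (fixedBy X g).Nonempty} * Nat.card (orbitRel.Quotient G (X × X)) := by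
  classical
  set s : Finset G := {g | (fixedBy X g).Nonempty}
  have sum_filter (n : ℕ) (hn : n ≠ 0) :
      ∑ g ∈ s, Nat.card (fixedBy X g) ^ n = ∑ g : G, Nat.card (fixedBy X g) ^ n :=
    sum_filter_of_ne fun g _ h => by
      by_contra hg
      simp [Set.not_nonempty_iff_eq_empty.mp hg, hn] at h
  refine Nat.le_of_mul_le_mul_right ?_ (Nat.card_pos (α := G))
  calc Nat.card G * Nat.card (orbitRel.Quotient G X) ^ 2 * Nat.card G
      = (∑ g ∈ s, Nat.card (fixedBy X g) ^ 1) ^ 2 := by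
        rw [sum_filter 1 one_ne_zero]; simp only [pow_one, sum_natCard_fixedBy]; ring
    _ ≤ #s * ∑ g ∈ s, Nat.card (fixedBy X g) ^ 2 := by
        simp only [pow_one]
        exact_mod_cast sq_sum_le_card_mul_sum_sq (s := s) (f := fun g => Nat.card (fixedBy X g))
    _ = _ := by
      rw [sum_filter 2 two_ne_zero, sum_natCard_fixedBy_sq, natCard_setOf_fixedBy_nonempty]; ring

theorem natCard_mul_le_of_le_natCard_fixedBy {m : ℕ}
    (hm : ∀ g : G, (fixedBy X g).Nonempty → m ≤ Nat.card (fixedBy X g)) :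
    Nat.card {g : G | (fixedBy X g).Nonempty} * m ≤
      Nat.card (orbitRel.Quotient G X) * Nat.card G := by
  classical
  rw [← sum_natCard_fixedBy, natCard_setOf_fixedBy_nonempty, card_eq_sum_ones, sum_mul, one_mul]
  calc ∑ g ∈ {g | (fixedBy X g).Nonempty}, m
      ≤ ∑ g ∈ {g | (fixedBy X g).Nonempty}, Nat.card (fixedBy X g) :=
        sum_le_sum fun g hg => hm g (mem_filter.mp hg).2
    _ ≤ ∑ g : G, Nat.card (fixedBy X g) := sum_le_sum_of_subset (subset_univ _)

end MulAction

theorem LinearIndependent.exists_linearEquiv_apply_eq {K V ι : Type*} [DivisionRing K]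
    [AddCommGroup V] [Module K V] [Finite ι] {u u' : ι → V}
    (hu : LinearIndependent K u) (hu' : LinearIndependent K u') :
    ∃ e : V ≃ₗ[K] V, ∀ i, e (u i) = u' i := by
  have : FiniteDimensional K (Submodule.span K (Set.range u)) :=
    FiniteDimensional.span_of_finite K (Set.finite_range u)
  obtain ⟨e, he⟩ := Submodule.exists_linearEquiv_restrict_eq
    (hu.linearCombinationEquiv.symm ≪≫ₗ hu'.linearCombinationEquiv)
  refine ⟨e, fun i => ?_⟩
  have hi : (⟨u i, Submodule.subset_span ⟨i, rfl⟩⟩ : Submodule.span K (Set.range u)) =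
      hu.linearCombinationEquiv (Finsupp.single i 1) := by ext; simp
  simpa [hi] using (he ⟨u i, Submodule.subset_span ⟨i, rfl⟩⟩).symm

namespace LinearMap.GeneralLinearGroup

variable {K V : Type*} [Field K] [AddCommGroup V] [Module K V]

instance [Finite V] : Finite (GeneralLinearGroup K V) :=
  have : Finite (Module.End K V) := .of_injective _ DFunLike.coe_injective
  inferInstance

instance isPretransitive_nonzero :
    IsPretransitive (GeneralLinearGroup K V) {v : V // v ≠ 0} where
  exists_smul_eq x y := by
    obtain ⟨e, he⟩ := (linearIndependent_unique_iff.mpr x.2 : LinearIndependent K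
      fun _ : Unit => (x : V)).exists_linearEquiv_apply_eq
        (linearIndependent_unique_iff.mpr y.2 : LinearIndependent K fun _ : Unit => (y : V))
    exact ⟨ofLinearEquiv e, Subtype.ext (he ())⟩

theorem natCard_orbitRel_quotient_prod_nonzero_le [Finite K] [Nontrivial V] :
    Nat.card (orbitRel.Quotient (GeneralLinearGroup K V)
      ({v : V // v ≠ 0} × {v : V // v ≠ 0})) ≤ Nat.card K := by
  obtain ⟨v₀, hv₀⟩ := exists_ne (0 : V)
  set x₀ : {v : V // v ≠ 0} := ⟨v₀, hv₀⟩
  obtain ⟨p₀, hp₀⟩ : ∃ p₀ : {v : V // v ≠ 0} × {v : V // v ≠ 0},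
      ∀ p : {v : V // v ≠ 0} × {v : V // v ≠ 0}, LinearIndependent K ![(p.1 : V), p.2] →
        LinearIndependent K ![(p₀.1 : V), p₀.2] := by
    by_cases h : ∃ p : {v : V // v ≠ 0} × {v : V // v ≠ 0}, LinearIndependent K ![(p.1 : V), p.2]
    · obtain ⟨p, hp⟩ := h
      exact ⟨p, fun _ _ => hp⟩
    · exact ⟨(x₀, x₀), fun p hp => (h ⟨p, hp⟩).elim⟩
  -- `(x, y)` lies in the orbit of `(x₀, c • x₀)` if `y = c • x`, and otherwise in that of `p₀`.
  let τ : Option Kˣ → orbitRel.Quotient (GeneralLinearGroup K V)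
      ({v : V // v ≠ 0} × {v : V // v ≠ 0})
    | some c => ⟦(x₀, c • x₀)⟧
    | none => ⟦p₀⟧
  calc _ ≤ Nat.card (Option Kˣ) := Nat.card_le_card_of_surjective τ ?_
    _ = Nat.card K := by
      rw [Finite.card_option, Nat.card_units]
      have := Nat.card_pos (α := K)
      omega
  rintro ⟨x, y⟩
  by_cases hxy : ∃ c : K, c • (x : V) = y
  · obtain ⟨c, hc⟩ := hxy
    have hc0 : c ≠ 0 := by
      rintro rfl
      exact y.2 (by simp [← hc])
    obtain ⟨g, hg⟩ := exists_smul_eq (GeneralLinearGroup K V) x₀ x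
    refine ⟨some (Units.mk0 c hc0), (Quotient.sound (mem_orbit_iff.mpr ⟨g, ?_⟩)).symm⟩
    refine Prod.ext hg (Subtype.ext ?_)
    change (g : V →ₗ[K] V) (c • v₀) = y
    rw [map_smul, ← hc, ← hg]
    rfl
  · have hli : LinearIndependent K ![(x : V), y] :=
      (LinearIndependent.pair_iff' x.2).mpr (by push Not at hxy; exact hxy)
    obtain ⟨e, he⟩ := (hp₀ (x, y) hli).exists_linearEquiv_apply_eq hli
    refine ⟨none, (Quotient.sound (mem_orbit_iff.mpr ⟨ofLinearEquiv e, ?_⟩)).symm⟩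
    exact Prod.ext (Subtype.ext (he 0)) (Subtype.ext (he 1))

theorem natCard_units_le_natCard_fixedBy [Finite V] {g : GeneralLinearGroup K V}
    (hg : (fixedBy {v : V // v ≠ 0} g).Nonempty) :
    Nat.card Kˣ ≤ Nat.card (fixedBy {v : V // v ≠ 0} g) := by
  obtain ⟨x, hx⟩ := hg
  refine Nat.card_le_card_of_injective (fun c => ⟨c • x, ?_⟩) fun c c' h => ?_
  · rw [mem_fixedBy] at hx ⊢
    refine Subtype.ext ?_
    change (g : V →ₗ[K] V) ((c : K) • (x : V)) = (c : K) • (x : V)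
    rw [map_smul]
    exact congrArg _ (Subtype.ext_iff.mp hx)
  · exact Units.ext (smul_left_injective K x.2 (congrArg Subtype.val (Subtype.ext_iff.mp h)))

theorem natCard_orbitRel_quotient_nonzero_eq_one [Nontrivial V] :
    Nat.card (orbitRel.Quotient (GeneralLinearGroup K V) {v : V // v ≠ 0}) = 1 := by
  obtain ⟨v, hv⟩ := exists_ne (0 : V)
  have := (pretransitive_iff_subsingleton_quotient (GeneralLinearGroup K V)
    {v : V // v ≠ 0}).mp inferInstance
  exact Nat.card_eq_one_iff_unique.mpr ⟨this, ⟨⟦⟨v, hv⟩⟧⟩⟩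

variable [Finite K] [Module.Finite K V] [Nontrivial V]

theorem natCard_le_natCard_setOf_fixedBy_nonempty_mul :
    Nat.card (GeneralLinearGroup K V) ≤
      Nat.card {g : GeneralLinearGroup K V | (fixedBy {v : V // v ≠ 0} g).Nonempty} *
        Nat.card K := by
  have := Module.finite_of_finite K (M := V)
  have := Fintype.ofFinite (GeneralLinearGroup K V)
  calc Nat.card (GeneralLinearGroup K V)
      = Nat.card (GeneralLinearGroup K V) *
          Nat.card (orbitRel.Quotient (GeneralLinearGroup K V) {v : V // v ≠ 0}) ^ 2 := by
        rw [natCard_orbitRel_quotient_nonzero_eq_one, one_pow, mul_one]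
    _ ≤ _ := natCard_mul_sq_natCard_orbits_le _ _
    _ ≤ _ := Nat.mul_le_mul_left _ natCard_orbitRel_quotient_prod_nonzero_le

theorem natCard_setOf_fixedBy_nonempty_mul_le :
    Nat.card {g : GeneralLinearGroup K V | (fixedBy {v : V // v ≠ 0} g).Nonempty} *
        (Nat.card K - 1) ≤ Nat.card (GeneralLinearGroup K V) := by
  have := Module.finite_of_finite K (M := V)
  have := Fintype.ofFinite (GeneralLinearGroup K V)
  have h := natCard_mul_le_of_le_natCard_fixedBy (X := {v : V // v ≠ 0}) fun g hg =>
    (Nat.card_units K).symm.le.trans (natCard_units_le_natCard_fixedBy hg)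
  rwa [natCard_orbitRel_quotient_nonzero_eq_one, one_mul] at h

end LinearMap.GeneralLinearGroup

theorem Matrix.GeneralLinearGroup.natCard_setOf_exists_mulVec_eq_self {n K : Type*} [Fintype n]
    [DecidableEq n] [Field K] :
    Nat.card {g : GL n K | ∃ v : n → K, v ≠ 0 ∧ (g : Matrix n n K) *ᵥ v = v} =
      Nat.card {g : LinearMap.GeneralLinearGroup K (n → K) |
        (fixedBy {v : n → K // v ≠ 0} g).Nonempty} :=
  Nat.card_congr <| toLin.toEquiv.subtypeEquiv fun _ =>
    ⟨fun ⟨v, hv, h⟩ => ⟨⟨v, hv⟩, Subtype.ext h⟩, fun ⟨x, hx⟩ => ⟨x, x.2, congrArg Subtype.val hx⟩⟩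

/-- For every positive integer `r` there exist positive real constants `c₁'`, `c₂'`,
depending only on `r`, such that for every finite field `F` of cardinality `q`,
`c₁'/q ≤ #S(r, F) / #GL(r, F) ≤ c₂'/q`, where `S(r, F)` is the set of invertible
matrices fixing some nonzero vector. -/
theorem density_fixing_matrices_bounds (r : ℕ) (hr : 0 < r) :
    ∃ c₁' c₂' : ℝ, 0 < c₁' ∧ 0 < c₂' ∧
      ∀ (F : Type) [Field F] [Fintype F],
        c₁' / (Fintype.card F : ℝ) ≤
            (Nat.card {g : GL (Fin r) F |
                ∃ v : Fin r → F, v ≠ 0 ∧ Matrix.mulVec (↑g) v = v} : ℝ) /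
              (Nat.card (GL (Fin r) F) : ℝ) ∧
          (Nat.card {g : GL (Fin r) F |
                ∃ v : Fin r → F, v ≠ 0 ∧ Matrix.mulVec (↑g) v = v} : ℝ) /
              (Nat.card (GL (Fin r) F) : ℝ) ≤
            c₂' / (Fintype.card F : ℝ) := by
  refine ⟨1, 2, one_pos, two_pos, fun F _ _ => ?_⟩
  have : Nonempty (Fin r) := ⟨⟨0, hr⟩⟩
  have hcard : Nat.card (GL (Fin r) F) = Nat.card (LinearMap.GeneralLinearGroup F (Fin r → F)) :=
    Nat.card_congr GeneralLinearGroup.toLin.toEquiv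
  rw [GeneralLinearGroup.natCard_setOf_exists_mulVec_eq_self, hcard, ← Nat.card_eq_fintype_card]
  have hlower := LinearMap.GeneralLinearGroup.natCard_le_natCard_setOf_fixedBy_nonempty_mul
    (K := F) (V := Fin r → F)
  have hupper := LinearMap.GeneralLinearGroup.natCard_setOf_fixedBy_nonempty_mul_le
    (K := F) (V := Fin r → F)
  have hq : (2 : ℝ) ≤ Nat.card F := by exact_mod_cast Finite.one_lt_card
  have hG : (0 : ℝ) < Nat.card (LinearMap.GeneralLinearGroup F (Fin r → F)) := by
    exact_mod_cast Nat.card_pos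
  rw [← Nat.cast_le (α := ℝ)] at hlower hupper
  push_cast [Nat.cast_sub (Nat.card_pos : 0 < Nat.card F)] at hlower hupper
  constructor
  · rw [div_le_div_iff₀ (by positivity) hG]
    linarith
  · rw [div_le_div_iff₀ hG (by positivity)]
    nlinarith
end

section
/- For every positive integer r and every integer j with 1 ≤ j ≤ r there exists a positive real constant α, depending only on r and j, such that for every finite field F of cardinality q the number of matrices g ∈ GL(r,F) whose fixed space V^g = { v ∈ F^r : g·v = v } has F-dimension at least j is at most α·q^(r²−j²). -/
/-!
Double count the pairs `(f, v)` of an endomorphism `f` of `V = K^n` and a linearly independent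
`j`-tuple `v` fixed by `f`. An `f` whose fixed space has dimension at least `j` fixes at least
`∏_{i<j} (q^j - q^i) ≥ q^{j²} / 2^j` such tuples, while a given tuple is fixed by at most
`q^{(n-j)n}` endomorphisms (a coset of the kernel of the surjection `f ↦ (f (v i))_i`), and there
are at most `q^{nj}` tuples. Hence at most `2^j q^{n² - j²}` endomorphisms have such a fixed
space.
-/

open Matrix Module LinearMap Finset

theorem LinearMap.natCard_fiber_le_natCard_ker {R M N : Type*} [Ring R] [AddCommGroup M]
    [AddCommGroup N] [Module R M] [Module R N] [Finite M] (f : M →ₗ[R] N) (y : N) :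
    Nat.card {x // f x = y} ≤ Nat.card (ker f) := by
  rcases isEmpty_or_nonempty {x // f x = y} with h | ⟨x₀, hx₀⟩
  · simp
  · refine Nat.card_le_card_of_injective (fun x => ⟨x.1 - x₀, by simp [x.2, hx₀]⟩) ?_
    intro a b h
    ext
    simpa using congrArg Subtype.val h

theorem LinearIndependent.exists_linearMap_apply_eq {K V W ι : Type*} [Field K] [AddCommGroup V]
    [Module K V] [AddCommGroup W] [Module K W] [Fintype ι] {v : ι → V}
    (hv : LinearIndependent K v) (w : ι → W) : ∃ f : V →ₗ[K] W, ∀ i, f (v i) = w i := by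
  classical
  obtain ⟨g, hg⟩ := (Fintype.linearCombination K v).exists_leftInverse_of_injective
    (ker_eq_bot.mpr (linearIndependent_iff_injective_fintypeLinearCombination.mp hv))
  refine ⟨Fintype.linearCombination K w ∘ₗ g, fun i => ?_⟩
  have hgv : g (v i) = Pi.single i 1 := by
    simpa using LinearMap.congr_fun hg (Pi.single i 1)
  simp [hgv]

theorem Nat.pow_le_two_mul_pow_sub_pow {q i j : ℕ} (hq : 2 ≤ q) (hij : i < j) :
    q ^ j ≤ 2 * (q ^ j - q ^ i) := by
  have hi : q ^ i ≤ q ^ (j - 1) := Nat.pow_le_pow_right (by omega) (by omega)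
  have hj : q ^ j = q * q ^ (j - 1) := by rw [← pow_succ']; congr 1; omega
  have : 2 * q ^ (j - 1) ≤ q * q ^ (j - 1) := Nat.mul_le_mul_right _ hq
  omega

theorem Nat.pow_mul_self_le_two_pow_mul_prod {q : ℕ} (hq : 2 ≤ q) (j : ℕ) :
    q ^ (j * j) ≤ 2 ^ j * ∏ i : Fin j, (q ^ j - q ^ (i : ℕ)) := by
  calc q ^ (j * j) = ∏ _i : Fin j, q ^ j := by simp [← pow_mul]
    _ ≤ ∏ i : Fin j, 2 * (q ^ j - q ^ (i : ℕ)) :=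
      prod_le_prod' fun i _ => Nat.pow_le_two_mul_pow_sub_pow hq i.2
    _ = _ := by rw [prod_mul_distrib, prod_const, Finset.card_univ, Fintype.card_fin]

section FiniteField

variable {K V : Type*} [Field K] [Fintype K] [AddCommGroup V] [Module K V]
  [FiniteDimensional K V]

theorem LinearIndependent.natCard_linearMap_apply_eq_le {W ι : Type*} [AddCommGroup W]
    [Module K W] [FiniteDimensional K W] [Fintype ι] {v : ι → V}
    (hv : LinearIndependent K v) (w : ι → W) :
    Nat.card {f : V →ₗ[K] W // ∀ i, f (v i) = w i} ≤
      Fintype.card K ^ ((finrank K V - Fintype.card ι) * finrank K W) := by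
  have := Module.finite_of_finite K (M := V →ₗ[K] W)
  let eval : (V →ₗ[K] W) →ₗ[K] (ι → W) := LinearMap.pi fun i => LinearMap.applyₗ (v i)
  have heval : Function.Surjective eval := fun w' => by
    obtain ⟨f, hf⟩ := hv.exists_linearMap_apply_eq w'
    exact ⟨f, funext hf⟩
  have hker : finrank K (ker eval) = (finrank K V - Fintype.card ι) * finrank K W := by
    have := eval.finrank_range_add_finrank_ker
    rw [range_eq_top.mpr heval, finrank_top, finrank_linearMap, finrank_pi_fintype] at this
    simp only [sum_const, Finset.card_univ, smul_eq_mul] at this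
    rw [Nat.sub_mul]
    omega
  calc Nat.card {f : V →ₗ[K] W // ∀ i, f (v i) = w i}
      = Nat.card {f // eval f = w} := by simp [eval, funext_iff]
    _ ≤ Nat.card (ker eval) := eval.natCard_fiber_le_natCard_ker w
    _ = _ := by rw [natCard_eq_pow_finrank (K := K), hker, Nat.card_eq_fintype_card]

theorem Submodule.prod_pow_sub_pow_le_natCard_linearIndependent {j : ℕ} (U : Submodule K V)
    (hj : j ≤ finrank K U) :
    ∏ i : Fin j, (Fintype.card K ^ j - Fintype.card K ^ (i : ℕ)) ≤
      Nat.card {v : Fin j → V // LinearIndependent K v ∧ ∀ i, v i ∈ U} := by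
  have := Module.finite_of_finite K (M := V)
  calc ∏ i : Fin j, (Fintype.card K ^ j - Fintype.card K ^ (i : ℕ))
      ≤ ∏ i : Fin j, (Fintype.card K ^ finrank K U - Fintype.card K ^ (i : ℕ)) := by
        gcongr
        exact Fintype.card_pos
    _ = Nat.card {v : Fin j → U // LinearIndependent K v} := (card_linearIndependent hj).symm
    _ ≤ _ := Nat.card_le_card_of_injective
        (fun v => ⟨U.subtype ∘ v.1, v.2.map' _ U.ker_subtype, fun i => (v.1 i).2⟩)
        fun v w h => Subtype.ext <| funext fun i =>
          Subtype.ext <| congrFun (congrArg Subtype.val h) i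

theorem LinearMap.natCard_setOf_le_finrank_ker_sub_id_mul_prod_le (j : ℕ) :
    Nat.card {f : V →ₗ[K] V | j ≤ finrank K (ker (f - id))} *
        ∏ i : Fin j, (Fintype.card K ^ j - Fintype.card K ^ (i : ℕ)) ≤
      Fintype.card K ^ (finrank K V * j) * Fintype.card K ^ ((finrank K V - j) * finrank K V) := by
  classical
  have := Module.finite_of_finite K (M := V)
  have := Module.finite_of_finite K (M := V →ₗ[K] V)
  have := Fintype.ofFinite V
  have := Fintype.ofFinite (V →ₗ[K] V)
  let S := univ.filter fun f : V →ₗ[K] V => j ≤ finrank K (ker (f - id))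
  let T := univ.filter fun v : Fin j → V => LinearIndependent K v
  have hS : Nat.card {f : V →ₗ[K] V | j ≤ finrank K (ker (f - id))} = #S := by
    simp [S, Nat.card_eq_fintype_card, Fintype.card_subtype]
  have hT : #T ≤ Fintype.card K ^ (finrank K V * j) := by
    calc #T ≤ Fintype.card (Fin j → V) := card_le_univ T
      _ = _ := by rw [Fintype.card_fun, card_eq_pow_finrank (K := K), Fintype.card_fin, pow_mul]
  rw [hS]
  refine (card_mul_le_card_mul (fun f v => ∀ i, f (v i) = v i) (fun f hf => ?_)
    (fun v hv => ?_)).trans (Nat.mul_le_mul_right _ hT)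
  · calc ∏ i : Fin j, (Fintype.card K ^ j - Fintype.card K ^ (i : ℕ))
        ≤ Nat.card {v : Fin j → V // LinearIndependent K v ∧ ∀ i, v i ∈ ker (f - id)} :=
          Submodule.prod_pow_sub_pow_le_natCard_linearIndependent _ (mem_filter.mp hf).2
      _ = _ := by
          simp [bipartiteAbove, T, filter_filter, Nat.card_eq_fintype_card,
            Fintype.card_subtype, sub_eq_zero]
  · calc _ ≤ #(univ.filter fun f : V →ₗ[K] V => ∀ i, f (v i) = v i) :=
          card_le_card <| filter_subset_filter _ (subset_univ S)
      _ = Nat.card {f : V →ₗ[K] V // ∀ i, f (v i) = v i} := by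
          rw [Nat.card_eq_fintype_card, Fintype.card_subtype]
      _ ≤ _ := by simpa using (mem_filter.mp hv).2.natCard_linearMap_apply_eq_le v

theorem LinearMap.natCard_setOf_le_finrank_ker_sub_id_le (j : ℕ) :
    Nat.card {f : V →ₗ[K] V | j ≤ finrank K (ker (f - id))} ≤
      2 ^ j * Fintype.card K ^ (finrank K V ^ 2 - j ^ 2) := by
  set q := Fintype.card K
  set n := finrank K V
  rcases lt_or_ge n j with hnj | hjn
  · have : {f : V →ₗ[K] V | j ≤ finrank K (ker (f - id))} = ∅ :=
      Set.eq_empty_of_forall_notMem fun f hf => (Submodule.finrank_le _).trans_lt hnj |>.not_ge hf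
    simp [this]
  set N := Nat.card {f : V →ₗ[K] V | j ≤ finrank K (ker (f - id))}
  have hexp : n * j + (n - j) * n = n ^ 2 - j ^ 2 + j * j := by
    zify [hjn, Nat.pow_le_pow_left hjn 2]
    ring
  have key : N * q ^ (j * j) ≤ 2 ^ j * q ^ (n ^ 2 - j ^ 2) * q ^ (j * j) := calc
    N * q ^ (j * j) ≤ N * (2 ^ j * ∏ i : Fin j, (q ^ j - q ^ (i : ℕ))) :=
        Nat.mul_le_mul_left _ (Nat.pow_mul_self_le_two_pow_mul_prod Fintype.one_lt_card j)
    _ = 2 ^ j * (N * ∏ i : Fin j, (q ^ j - q ^ (i : ℕ))) := by ring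
    _ ≤ 2 ^ j * (q ^ (n * j) * q ^ ((n - j) * n)) :=
        Nat.mul_le_mul_left _ (natCard_setOf_le_finrank_ker_sub_id_mul_prod_le j)
    _ = 2 ^ j * q ^ (n ^ 2 - j ^ 2) * q ^ (j * j) := by
        rw [mul_assoc, ← pow_add, ← pow_add, hexp]
  exact Nat.le_of_mul_le_mul_right key (by positivity)

end FiniteField

theorem card_large_fixed_space_le_general (r j : ℕ) :
    ∃ α : ℝ, 0 < α ∧
      ∀ (F : Type) [Field F] [Fintype F],
        (Nat.card {g : GL (Fin r) F |
            j ≤ Module.finrank F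
              (LinearMap.ker
                (Matrix.toLin' (↑g : Matrix (Fin r) (Fin r) F) - LinearMap.id))} : ℝ) ≤
          α * (Fintype.card F : ℝ) ^ (r ^ 2 - j ^ 2) := by
  refine ⟨2 ^ j, by positivity, fun F _ _ => ?_⟩
  have := Module.finite_of_finite F (M := (Fin r → F) →ₗ[F] (Fin r → F))
  have hGL : Nat.card {g : GL (Fin r) F |
        j ≤ finrank F (ker (toLin' (↑g : Matrix (Fin r) (Fin r) F) - LinearMap.id))} ≤
      Nat.card {f : (Fin r → F) →ₗ[F] (Fin r → F) |
        j ≤ finrank F (ker (f - LinearMap.id))} :=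
    Nat.card_le_card_of_injective (fun g => ⟨toLin' (g.1 : Matrix (Fin r) (Fin r) F), g.2⟩)
      fun g h hgh => Subtype.ext <| Units.ext <| toLin'.injective <| congrArg Subtype.val hgh
  have hEnd := natCard_setOf_le_finrank_ker_sub_id_le (K := F) (V := Fin r → F) j
  rw [finrank_fin_fun] at hEnd
  exact_mod_cast hGL.trans hEnd

/-- For every positive integer `r` and every `j` with `1 ≤ j ≤ r` there exists a positive
real constant `α`, depending only on `r` and `j`, such that for every finite field `F` of
cardinality `q` the number of `g ∈ GL(r, F)` whose fixed space
`V^g = {v : g • v = v}` has dimension at least `j` is at most `α * q ^ (r² - j²)`. -/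
theorem card_large_fixed_space_le (r j : ℕ) (hj : 1 ≤ j) (hjr : j ≤ r) :
    ∃ α : ℝ, 0 < α ∧
      ∀ (F : Type) [Field F] [Fintype F],
        (Nat.card {g : GL (Fin r) F |
            j ≤ Module.finrank F
              (LinearMap.ker
                (Matrix.toLin' (↑g : Matrix (Fin r) (Fin r) F) - LinearMap.id))} : ℝ) ≤
          α * (Fintype.card F : ℝ) ^ (r ^ 2 - j ^ 2) :=
  card_large_fixed_space_le_general r j
end

section
/- For every integer r ≥ 2 there exists a positive real constant α, depending only on r, such that for every finite field F of cardinality q one has #S(r,F) ≥ (q^r − 1)(q^r − q)⋯(q^r − q^(r−1))/(q − 1) − α·q^(r²−3). -/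
/-!
Write `m(g) = q^d(g)` for the number of vectors fixed by `g ∈ GL(V)`. The action of `GL(V)` on `V`
has at least the two orbits `{0}` and `V ∖ {0}`, so Burnside's lemma gives
`|GL(V)| ≤ ∑_g (m(g) - 1)`. When `d(g) ≥ 1`, `(q² - 1)(m - 1) ≤ (q² - 1)(q - 1) + (m - 1)(m - q)`
because `(m - q)(m - q²) ≥ 0`, and `(m - 1)(m - q)` is the number of linearly independent pairs
fixed by `g`. Summed over `g`, these pairs are counted instead by their pointwise stabilisers, each
of order at most `q^(r(r-2))`, so the sum is at most `q^(r²)`. Hence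
`(q² - 1)|GL(V)| ≤ (q² - 1)(q - 1)|S| + q^(r²)`, which gives the bound with `α = 4`
since `q³ ≤ 4(q - 1)(q² - 1)`.
-/

open Module MulAction Matrix

namespace MulAction

variable {G X : Type*} [Group G] [MulAction G X]

theorem two_mul_card_le_sum_card_fixedBy [Fintype G] [Finite X] {x y : X}
    (hxy : y ∉ orbit G x) : 2 * Nat.card G ≤ ∑ g : G, Nat.card (fixedBy X g) := by
  classical
  have : Fintype X := Fintype.ofFinite X
  have : Fintype (orbitRel.Quotient G X) := Fintype.ofFinite _
  have hΩ : 2 ≤ Nat.card (orbitRel.Quotient G X) := by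
    have : Nontrivial (orbitRel.Quotient G X) :=
      nontrivial_of_ne (Quotient.mk _ y) (Quotient.mk _ x) fun h => hxy (Quotient.exact h)
    exact Finite.one_lt_card
  have burnside := sum_card_fixedBy_eq_card_orbits_mul_card_group G X
  simp only [← Nat.card_eq_fintype_card] at burnside
  rw [burnside]
  exact Nat.mul_le_mul_right _ hΩ

end MulAction

theorem sq_sub_one_mul_pow_sub_one_le {q : ℝ} (hq : 1 ≤ q) {d : ℕ} (hd : d ≠ 0) :
    (q ^ 2 - 1) * (q ^ d - 1) ≤ (q ^ 2 - 1) * (q - 1) + (q ^ d - 1) * (q ^ d - q) := by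
  have key : 0 ≤ (q ^ d - q) * (q ^ d - q ^ 2) := by
    rcases (Nat.one_le_iff_ne_zero.2 hd).eq_or_lt with rfl | hd
    · simp
    · exact mul_nonneg (by linarith [pow_le_pow_right₀ hq hd.le, pow_one q])
        (by linarith [pow_le_pow_right₀ hq hd])
  nlinarith [key]

theorem div_sub_four_mul_pow_le {q N s : ℝ} (hq : 2 ≤ q) {e : ℕ}
    (h : (q ^ 2 - 1) * N ≤ (q ^ 2 - 1) * (q - 1) * s + q ^ (e + 3)) :
    N / (q - 1) - 4 * q ^ e ≤ s := by
  have hq3 : q ^ 3 ≤ 4 * (q - 1) * (q ^ 2 - 1) := by nlinarith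
  have key : q ^ e * q ^ 3 ≤ q ^ e * (4 * (q - 1) * (q ^ 2 - 1)) :=
    mul_le_mul_of_nonneg_left hq3 (by positivity)
  rw [sub_le_iff_le_add, div_le_iff₀ (by linarith)]
  refine le_of_mul_le_mul_left ?_ (by nlinarith : 0 < q ^ 2 - 1)
  rw [pow_add] at h
  linarith

theorem Matrix.GeneralLinearGroup.card_setOf_exists_mulVec_eq_self {n R : Type*} [Fintype n]
    [DecidableEq n] [CommRing R] :
    Nat.card {g : GL n R | ∃ v : n → R, v ≠ 0 ∧ (g : Matrix n n R) *ᵥ v = v} =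
      Nat.card {g : LinearMap.GeneralLinearGroup R (n → R) | ∃ v : n → R, v ≠ 0 ∧ g • v = v} :=
  Nat.card_congr <| toLin.toEquiv.subtypeEquiv fun g => by
    simp [Units.smul_def]

namespace LinearMap.GeneralLinearGroup

variable {F V : Type*} [Field F] [AddCommGroup V] [Module F V]

theorem fixedBy_eq_eigenspace (g : GeneralLinearGroup F V) :
    fixedBy V g = (End.eigenspace (g : Module.End F V) 1 : Set V) := by
  ext v
  simp [Units.smul_def]

theorem exists_ne_zero_smul_eq_self [FiniteDimensional F V] (g : GeneralLinearGroup F V)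
    (hg : finrank F (End.eigenspace (g : Module.End F V) 1) ≠ 0) : ∃ v : V, v ≠ 0 ∧ g • v = v := by
  obtain ⟨v, hv, hv0⟩ := Submodule.exists_mem_ne_zero_of_ne_bot
    (mt Submodule.finrank_eq_zero.2 hg)
  rw [← SetLike.mem_coe, ← fixedBy_eq_eigenspace] at hv
  exact ⟨v, hv0, hv⟩

variable [Finite V]

instance : Finite (GeneralLinearGroup F V) :=
  Finite.of_injective (fun g : GeneralLinearGroup F V => ((g : Module.End F V) : V → V))
    fun _ _ h => Units.ext (DFunLike.coe_injective h)

attribute [local instance] Fintype.ofFinite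

theorem card_le_sum_card_fixedBy_sub_one [Nontrivial V] :
    (Nat.card (GeneralLinearGroup F V) : ℝ) ≤
      ∑ g : GeneralLinearGroup F V, ((Nat.card (fixedBy V g) : ℝ) - 1) := by
  obtain ⟨v, hv⟩ := exists_ne (0 : V)
  have hburnside : (2 * Nat.card (GeneralLinearGroup F V) : ℝ) ≤
      ∑ g : GeneralLinearGroup F V, (Nat.card (fixedBy V g) : ℝ) := by
    exact_mod_cast two_mul_card_le_sum_card_fixedBy (x := 0) (y := v)
      (by rintro ⟨g, hg⟩; exact hv (by simpa using hg.symm))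
  rw [Finset.sum_sub_distrib, Finset.sum_const, Finset.card_univ, ← Nat.card_eq_fintype_card,
    nsmul_eq_mul, mul_one]
  linarith

end LinearMap.GeneralLinearGroup

section FiniteField

variable {F V : Type*} [Field F] [Fintype F] [AddCommGroup V] [Module F V] [Finite V]

theorem Submodule.card_linearIndependent_range_subset (W : Submodule F V) {k : ℕ}
    (hk : k ≤ finrank F W) :
    Nat.card {s : Fin k → V // LinearIndependent F s ∧ Set.range s ⊆ W} =
      ∏ i : Fin k, (Fintype.card F ^ finrank F W - Fintype.card F ^ i.val) := by
  rw [← card_linearIndependent hk]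
  refine Nat.card_congr
    { toFun := fun s => ⟨fun i => ⟨s.1 i, s.2.2 ⟨i, rfl⟩⟩,
        (W.subtype.linearIndependent_iff W.ker_subtype).1 s.2.1⟩
      invFun := fun t => ⟨fun i => t.1 i, (W.subtype.linearIndependent_iff W.ker_subtype).2 t.2,
        by rintro _ ⟨i, rfl⟩; exact (t.1 i).2⟩
      left_inv := fun _ => rfl
      right_inv := fun _ => rfl }

theorem Submodule.pow_sub_one_mul_pow_sub_le_card_linearIndependent_pair (W : Submodule F V) :
    ((Fintype.card F : ℝ) ^ finrank F W - 1) *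
        ((Fintype.card F : ℝ) ^ finrank F W - Fintype.card F) ≤
      Nat.card {s : Fin 2 → V // LinearIndependent F s ∧ Set.range s ⊆ W} := by
  rcases lt_or_ge (finrank F W) 2 with hW | hW
  · interval_cases finrank F W <;> simp
  · have hq : 1 ≤ Fintype.card F := Fintype.card_pos
    rw [W.card_linearIndependent_range_subset hW, Fin.prod_univ_two]
    simp only [Fin.val_zero, Fin.val_one, pow_zero, pow_one]
    rw [Nat.cast_mul, Nat.cast_sub (Nat.one_le_pow _ _ hq),
      Nat.cast_sub (Nat.le_self_pow (by omega) _)]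
    push_cast
    exact le_rfl

namespace LinearMap.GeneralLinearGroup

attribute [local instance] Fintype.ofFinite

theorem card_fixedBy (g : GeneralLinearGroup F V) :
    Nat.card (fixedBy V g) =
      Fintype.card F ^ finrank F (End.eigenspace (g : Module.End F V) 1) := by
  rw [fixedBy_eq_eigenspace, SetLike.coe_sort_coe, Module.natCard_eq_pow_finrank (K := F),
    Nat.card_eq_fintype_card]

theorem card_fixingSubgroup_range_le {ι : Type*} [Fintype ι] {s : ι → V}
    (hs : LinearIndependent F s) :
    Nat.card (fixingSubgroup (GeneralLinearGroup F V) (Set.range s)) ≤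
      Fintype.card F ^ ((finrank F V - Fintype.card ι) * finrank F V) := by
  -- an element fixing `s` is determined by its restriction to a complement of `span s`
  obtain ⟨W, hW⟩ := (Submodule.span F (Set.range s)).exists_isCompl
  have hrank : finrank F W = finrank F V - Fintype.card ι := by
    rw [← Submodule.finrank_add_eq_of_isCompl hW, finrank_span_eq_card hs, Nat.add_sub_cancel_left]
  have hinj : Function.Injective fun g : fixingSubgroup (GeneralLinearGroup F V) (Set.range s) =>
      ((g : GeneralLinearGroup F V) : Module.End F V) ∘ₗ W.subtype := by
    intro g₁ g₂ h
    refine Subtype.ext (Units.ext (LinearMap.ext_on (s := Set.range s ∪ W) ?_ ?_))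
    · rw [Submodule.span_union, Submodule.span_eq, hW.sup_eq_top]
    · rintro v (hv | hv)
      · exact ((mem_fixingSubgroup_iff _).1 g₁.2 v hv).trans
          ((mem_fixingSubgroup_iff _).1 g₂.2 v hv).symm
      · exact LinearMap.congr_fun h ⟨v, hv⟩
  have : Finite (W →ₗ[F] V) := Module.finite_of_finite F
  calc Nat.card (fixingSubgroup (GeneralLinearGroup F V) (Set.range s))
      ≤ Nat.card (W →ₗ[F] V) := Nat.card_le_card_of_injective _ hinj
    _ = Fintype.card F ^ ((finrank F V - Fintype.card ι) * finrank F V) := by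
      rw [Module.natCard_eq_pow_finrank (K := F), finrank_linearMap, hrank,
        Nat.card_eq_fintype_card]

theorem sum_card_linearIndependent_subset_fixedBy_le {k : ℕ} (hk : k ≤ finrank F V) :
    ∑ g : GeneralLinearGroup F V,
        Nat.card {s : Fin k → V // LinearIndependent F s ∧ Set.range s ⊆ fixedBy V g} ≤
      Fintype.card F ^ (finrank F V ^ 2) := by
  classical
  calc ∑ g : GeneralLinearGroup F V,
        Nat.card {s : Fin k → V // LinearIndependent F s ∧ Set.range s ⊆ fixedBy V g}
      = ∑ s : Fin k → V, if LinearIndependent F s then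
          Nat.card (fixingSubgroup (GeneralLinearGroup F V) (Set.range s)) else 0 := by
        simp only [Nat.card_eq_fintype_card, Fintype.card_subtype, Finset.card_filter]
        rw [Finset.sum_comm]
        refine Finset.sum_congr rfl fun s _ => ?_
        split_ifs with hs <;> simp [hs, mem_fixingSubgroup_iff_subset_fixedBy]
    _ ≤ ∑ _s : Fin k → V, Fintype.card F ^ ((finrank F V - k) * finrank F V) := by
        gcongr with s
        split_ifs with hs
        · simpa using card_fixingSubgroup_range_le hs
        · exact Nat.zero_le _
    _ = Fintype.card F ^ (finrank F V ^ 2) := by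
        rw [Finset.sum_const, Finset.card_univ, smul_eq_mul, ← Nat.card_eq_fintype_card,
          Nat.card_fun, Module.natCard_eq_pow_finrank (K := F), Nat.card_eq_fintype_card,
          Nat.card_eq_fintype_card, Fintype.card_fin, ← pow_mul, ← pow_add]
        obtain ⟨j, hj⟩ := Nat.exists_eq_add_of_le hk
        rw [hj, Nat.add_sub_cancel_left]
        ring

open scoped Classical in
theorem sq_sub_one_mul_card_fixedBy_sub_one_le (g : GeneralLinearGroup F V) :
    ((Fintype.card F : ℝ) ^ 2 - 1) * ((Nat.card (fixedBy V g) : ℝ) - 1) ≤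
      ((Fintype.card F : ℝ) ^ 2 - 1) * (Fintype.card F - 1) *
          (if ∃ v : V, v ≠ 0 ∧ g • v = v then 1 else 0) +
        Nat.card {s : Fin 2 → V // LinearIndependent F s ∧ Set.range s ⊆ fixedBy V g} := by
  have hq : (1 : ℝ) ≤ Fintype.card F := Nat.one_le_cast.2 Fintype.card_pos
  have hpair := Submodule.pow_sub_one_mul_pow_sub_le_card_linearIndependent_pair
    (End.eigenspace (g : Module.End F V) 1)
  rw [← fixedBy_eq_eigenspace] at hpair
  rw [card_fixedBy]
  by_cases hd : finrank F (End.eigenspace (g : Module.End F V) 1) = 0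
  · rw [hd, pow_zero, Nat.cast_one, sub_self, mul_zero]
    have : (0 : ℝ) ≤ ((Fintype.card F : ℝ) ^ 2 - 1) * (Fintype.card F - 1) :=
      mul_nonneg (by nlinarith) (by linarith)
    exact add_nonneg (mul_nonneg this (by split_ifs <;> norm_num)) (Nat.cast_nonneg _)
  · rw [if_pos (exists_ne_zero_smul_eq_self g hd)]
    push_cast
    linarith [sq_sub_one_mul_pow_sub_one_le hq hd]

theorem sq_sub_one_mul_card_le (hV : 2 ≤ finrank F V) :
    ((Fintype.card F : ℝ) ^ 2 - 1) * Nat.card (GeneralLinearGroup F V) ≤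
      ((Fintype.card F : ℝ) ^ 2 - 1) * (Fintype.card F - 1) *
          Nat.card {g : GeneralLinearGroup F V | ∃ v : V, v ≠ 0 ∧ g • v = v} +
        (Fintype.card F : ℝ) ^ (finrank F V ^ 2) := by
  classical
  have : Nontrivial V := Module.nontrivial_of_finrank_pos (by omega : 0 < finrank F V)
  set q : ℝ := (Fintype.card F : ℝ)
  have hq : 1 ≤ q := Nat.one_le_cast.2 Fintype.card_pos
  calc (q ^ 2 - 1) * Nat.card (GeneralLinearGroup F V)
      ≤ ∑ g, (q ^ 2 - 1) * ((Nat.card (fixedBy V g) : ℝ) - 1) := by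
        rw [← Finset.mul_sum]
        exact mul_le_mul_of_nonneg_left card_le_sum_card_fixedBy_sub_one
          (by nlinarith)
    _ ≤ ∑ g, ((q ^ 2 - 1) * (q - 1) * (if ∃ v : V, v ≠ 0 ∧ g • v = v then 1 else 0) +
          Nat.card {s : Fin 2 → V // LinearIndependent F s ∧ Set.range s ⊆ fixedBy V g}) :=
        Finset.sum_le_sum fun g _ => sq_sub_one_mul_card_fixedBy_sub_one_le g
    _ = (q ^ 2 - 1) * (q - 1) *
          Nat.card {g : GeneralLinearGroup F V | ∃ v : V, v ≠ 0 ∧ g • v = v} +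
        ∑ g, (Nat.card {s : Fin 2 → V // LinearIndependent F s ∧ Set.range s ⊆ fixedBy V g} :
          ℝ) := by
        rw [Finset.sum_add_distrib, ← Finset.mul_sum, Finset.sum_boole, Set.coe_ofPred,
          Nat.card_eq_fintype_card, Fintype.card_subtype]
    _ ≤ _ := by
        gcongr
        simp only [q]
        exact_mod_cast sum_card_linearIndependent_subset_fixedBy_le hV

theorem card_div_sub_le_card_exists_smul_eq_self (hV : 2 ≤ finrank F V) :
    (Nat.card (GeneralLinearGroup F V) : ℝ) / ((Fintype.card F : ℝ) - 1) -
        4 * (Fintype.card F : ℝ) ^ (finrank F V ^ 2 - 3) ≤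
      Nat.card {g : GeneralLinearGroup F V | ∃ v : V, v ≠ 0 ∧ g • v = v} := by
  refine div_sub_four_mul_pow_le (Nat.ofNat_le_cast.2 Fintype.one_lt_card) ?_
  rw [Nat.sub_add_cancel (by nlinarith)]
  exact sq_sub_one_mul_card_le hV

end LinearMap.GeneralLinearGroup

end FiniteField

/-- For every integer `r ≥ 2` there exists a positive real constant `α`, depending only on
`r`, such that for every finite field `F` of cardinality `q` one has
`#S(r, F) ≥ (q^r - 1)(q^r - q)⋯(q^r - q^(r-1))/(q - 1) - α * q^(r² - 3)`, where `S(r, F)`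
is the set of invertible matrices fixing some nonzero vector. -/
theorem card_fixing_matrices_lower_bound (r : ℕ) (hr : 2 ≤ r) :
    ∃ α : ℝ, 0 < α ∧
      ∀ (F : Type) [Field F] [Fintype F],
        (∏ i ∈ Finset.range r, ((Fintype.card F : ℝ) ^ r - (Fintype.card F : ℝ) ^ i)) /
              ((Fintype.card F : ℝ) - 1) -
            α * (Fintype.card F : ℝ) ^ (r ^ 2 - 3) ≤
          (Nat.card {g : GL (Fin r) F |
            ∃ v : Fin r → F, v ≠ 0 ∧ Matrix.mulVec (↑g) v = v} : ℝ) := by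
  refine ⟨4, by norm_num, fun F _ _ => ?_⟩
  have hrank : finrank F (Fin r → F) = r := by simp
  have hq : 1 ≤ Fintype.card F := Fintype.card_pos
  have hGL : (Nat.card (LinearMap.GeneralLinearGroup F (Fin r → F)) : ℝ) =
      ∏ i ∈ Finset.range r, ((Fintype.card F : ℝ) ^ r - (Fintype.card F : ℝ) ^ i) := by
    rw [← Nat.card_congr GeneralLinearGroup.toLin.toEquiv, card_GL_field, Nat.cast_prod,
      Fin.prod_univ_eq_prod_range (fun i => ((Fintype.card F ^ r - Fintype.card F ^ i : ℕ) : ℝ))]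
    refine Finset.prod_congr rfl fun i hi => ?_
    rw [Nat.cast_sub (Nat.pow_le_pow_right hq (Finset.mem_range.1 hi).le)]
    push_cast
    rfl
  have hbound := LinearMap.GeneralLinearGroup.card_div_sub_le_card_exists_smul_eq_self
    (F := F) (V := Fin r → F) (hrank.symm ▸ hr)
  rwa [hrank, hGL, ← GeneralLinearGroup.card_setOf_exists_mulVec_eq_self] at hbound
end
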